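/- Let k ≥ 3 be an integer, consider n = 2 battlefields with values v_1 = 1 and 0 < v_2 < 1, and common budget B = 1, and set p*_j = m_{v_j}^{-1}(x*) for j ∈ {1,2}. Then: (i) if k ≤ 1/v_2 + 1, then p*_1 = 1 and p*_2 = 0 (no player ever competes in the low-value battlefield); and (ii) if k > 1/v_2 + 1, then p*_2 > 0 (each player competes in the low-value battlefield with nonzero probability). -/

import Mathlib

/-
The marginal utility `m_v(p) = (v/k) ∑_{i<k-1} (1-p)^i` is continuous and strictly decreasing on
`[0,1]`, from `(k-1)v/k` to `v/k`, so `m_v^{-1}(x) > 0` exactly when `x < (k-1)v/k`.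
If `(k-1)v_2 ≤ 1`, the point `x = (k-1)v_2/k` lies at or below `1/k`: there the budget is spent
entirely on the first battlefield, and any smaller `x` overspends it, so `x* = (k-1)v_2/k`.
Otherwise the intermediate value theorem gives `p ∈ (0,1]` with `m_{v_2}(p) = m_1(1-p)`; this
common value spends exactly the budget and lies strictly below `(k-1)v_2/k`, hence so does `x*`.
-/

/-- Marginal utility `m_v(p)` of competing in a battlefield of value `v` in the
`k`-player Boolean General Lotto game, when each of the other `k−1` players
independently competes with probability `p`. -/
noncomputable def mMarg (k : ℕ) (v p : ℝ) : ℝ :=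
  if p = 0 then ((k : ℝ) - 1) * v / k else (v / k) * ((1 - (1 - p) ^ (k - 1)) / p)

open Finset Set

section MarginalUtility

variable {k : ℕ} {v : ℝ}

lemma mMarg_zero (k : ℕ) (v : ℝ) : mMarg k v 0 = ((k : ℝ) - 1) * v / k := if_pos rfl

lemma mMarg_one (hk : 2 ≤ k) (v : ℝ) : mMarg k v 1 = v / k := by
  simp [mMarg, zero_pow (by omega : k - 1 ≠ 0)]

lemma mMarg_eq_sum (k : ℕ) (v p : ℝ) :
    mMarg k v p = v / k * ∑ i ∈ range (k - 1), (1 - p) ^ i := by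
  rcases eq_or_ne p 0 with rfl | hp
  · rcases k with _ | k
    · simp [mMarg]
    · simp only [mMarg_zero, sub_zero, one_pow, sum_const, card_range, nsmul_eq_mul, mul_one]
      push_cast
      ring
  · rw [mMarg, if_neg hp, ← mul_neg_geom_sum, sub_sub_cancel, mul_div_cancel_left₀ _ hp]

lemma continuous_mMarg (k : ℕ) (v : ℝ) : Continuous (mMarg k v) := by
  simp only [funext (mMarg_eq_sum k v)]
  fun_prop

lemma strictAntiOn_mMarg (hk : 3 ≤ k) (hv : 0 < v) : StrictAntiOn (mMarg k v) (Icc 0 1) := by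
  intro a _ b ⟨_, hb1⟩ hab
  simp only [mMarg_eq_sum]
  refine mul_lt_mul_of_pos_left (sum_lt_sum (fun i _ => ?_) ⟨1, ?_, ?_⟩) (by positivity)
  · exact pow_le_pow_left₀ (by linarith) (by linarith) i
  · exact mem_range.2 (by omega)
  · simpa using hab

lemma exists_mMarg_eq_mMarg_one_sub (hk : 2 ≤ k) {w : ℝ}
    (h₀ : w / k < ((k : ℝ) - 1) * v / k) (h₁ : v / k < ((k : ℝ) - 1) * w / k) :
    ∃ p ∈ Ioc (0 : ℝ) 1, mMarg k v p = mMarg k w (1 - p) := by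
  let g p := mMarg k v p - mMarg k w (1 - p)
  have hg : ContinuousOn g (Icc 0 1) := by
    have := continuous_mMarg k v
    have := continuous_mMarg k w
    fun_prop
  have h0 : (0 : ℝ) ∈ Icc (g 1) (g 0) := by
    simp only [g, sub_zero, sub_self, mMarg_zero, mMarg_one hk, Set.mem_Icc]
    constructor <;> linarith
  obtain ⟨p, hp, hgp⟩ := intermediate_value_Icc' zero_le_one hg h0
  refine ⟨p, ⟨hp.1.lt_of_ne ?_, hp.2⟩, sub_eq_zero.1 hgp⟩
  rintro rfl
  simp only [g, sub_zero, mMarg_zero, mMarg_one hk] at hgp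
  linarith

variable {f : ℝ → ℝ}

lemma eq_one_of_le_of_leftInvOn_mMarg (hk : 2 ≤ k) (hinv : LeftInvOn f (mMarg k v) (Icc 0 1))
    (hlo : ∀ x < v / k, f x = 1) {x : ℝ} (hx : x ≤ v / k) : f x = 1 := by
  rcases hx.lt_or_eq with hx | rfl
  · exact hlo x hx
  · simpa [mMarg_one hk] using hinv (right_mem_Icc.2 zero_le_one)

lemma pos_of_lt_of_leftInvOn_mMarg (hk : 2 ≤ k) (hinv : LeftInvOn f (mMarg k v) (Icc 0 1))
    (hlo : ∀ x < v / k, f x = 1) {x : ℝ} (hx : x < ((k : ℝ) - 1) * v / k) : 0 < f x := by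
  rcases lt_or_ge x (v / k) with hlt | hge
  · simp [hlo x hlt]
  · have hmem : x ∈ Icc (mMarg k v 1) (mMarg k v 0) := by
      rw [mMarg_one hk, mMarg_zero]
      exact ⟨hge, hx.le⟩
    obtain ⟨p, hp, rfl⟩ := intermediate_value_Icc' zero_le_one
      (continuous_mMarg k v).continuousOn hmem
    rw [hinv hp]
    refine hp.1.lt_of_ne ?_
    rintro rfl
    simp [mMarg_zero] at hx

end MarginalUtility

section Budget

variable {k : ℕ} {w : ℝ} {f₀ f₁ : ℝ → ℝ}

lemma one_lt_budget_of_lt (hk : 2 ≤ k) (hlo₀ : ∀ x < 1 / (k : ℝ), f₀ x = 1)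
    (hinv₁ : LeftInvOn f₁ (mMarg k w) (Icc 0 1)) (hlo₁ : ∀ x < w / k, f₁ x = 1)
    {y : ℝ} (hy₀ : y < 1 / k) (hy₁ : y < ((k : ℝ) - 1) * w / k) : 1 < f₀ y + f₁ y := by
  rw [hlo₀ y hy₀, lt_add_iff_pos_right]
  exact pos_of_lt_of_leftInvOn_mMarg hk hinv₁ hlo₁ hy₁

lemma sInf_budget_eq_of_mul_le_one (hk : 2 ≤ k) (hinv₀ : LeftInvOn f₀ (mMarg k 1) (Icc 0 1))
    (hlo₀ : ∀ x < 1 / (k : ℝ), f₀ x = 1) (hinv₁ : LeftInvOn f₁ (mMarg k w) (Icc 0 1))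
    (hlo₁ : ∀ x < w / k, f₁ x = 1) (hw : ((k : ℝ) - 1) * w ≤ 1) :
    sInf {x | f₀ x + f₁ x ≤ 1} = ((k : ℝ) - 1) * w / k := by
  have hc : ((k : ℝ) - 1) * w / k ≤ 1 / k := by gcongr
  refine IsLeast.csInf_eq ⟨?_, fun y hy => not_lt.1 fun hyc => ?_⟩
  · have hc₁ : f₁ (((k : ℝ) - 1) * w / k) = 0 := by
      simpa [mMarg_zero] using hinv₁ (left_mem_Icc.2 zero_le_one)
    simp [eq_one_of_le_of_leftInvOn_mMarg hk hinv₀ hlo₀ hc, hc₁]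
  · exact (one_lt_budget_of_lt hk hlo₀ hinv₁ hlo₁ (hyc.trans_le hc) hyc).not_ge hy

lemma sInf_budget_lt_of_one_lt_mul (hk : 3 ≤ k) (hinv₀ : LeftInvOn f₀ (mMarg k 1) (Icc 0 1))
    (hlo₀ : ∀ x < 1 / (k : ℝ), f₀ x = 1) (hinv₁ : LeftInvOn f₁ (mMarg k w) (Icc 0 1))
    (hlo₁ : ∀ x < w / k, f₁ x = 1) (hw₀ : 0 < w) (hw₁ : w < 1) (hw : 1 < ((k : ℝ) - 1) * w) :
    sInf {x | f₀ x + f₁ x ≤ 1} < ((k : ℝ) - 1) * w / k := by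
  have hkR : (3 : ℝ) ≤ k := by exact_mod_cast hk
  obtain ⟨p, hp, hcross⟩ := exists_mMarg_eq_mMarg_one_sub (k := k) (v := w) (w := 1) (by omega)
    (by gcongr) (by gcongr; linarith)
  have hpS : mMarg k w p ∈ {x | f₀ x + f₁ x ≤ 1} := by
    rw [mem_ofPred_eq, hinv₁ (Ioc_subset_Icc_self hp), hcross,
      hinv₀ ⟨by linarith [hp.2], by linarith [hp.1]⟩]
    linarith
  have hbdd : BddBelow {x | f₀ x + f₁ x ≤ 1} := ⟨w / k, fun y hy => not_lt.1 fun hyw =>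
    (one_lt_budget_of_lt (by omega) hlo₀ hinv₁ hlo₁ (hyw.trans (by gcongr))
      (hyw.trans (by gcongr; nlinarith))).not_ge hy⟩
  rw [← mMarg_zero]
  exact (csInf_le hbdd hpS).trans_lt
    (strictAntiOn_mMarg hk hw₀ (left_mem_Icc.2 zero_le_one) (Ioc_subset_Icc_self hp) hp.1)

end Budget

theorem stmt18_general (k : ℕ) (hk : 3 ≤ k)
    -- two battlefields, `v 0 = 1` and `0 < v 1 < 1`, common budget `B = 1`:
    (v : Fin 2 → ℝ) (hv0 : v 0 = 1) (hv1 : 0 < v 1) (hv1' : v 1 < 1)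
    -- `minv j` is the extended inverse `m_{v_j}^{-1} : ℝ → [0,1]`:
    (minv : Fin 2 → ℝ → ℝ)
    (hminv_inv : ∀ j, ∀ p ∈ Set.Icc (0 : ℝ) 1, minv j (mMarg k (v j) p) = p)
    (hminv_lo : ∀ j, ∀ x : ℝ, x < v j / k → minv j x = 1)
    -- `x* = inf {x : Σ_j m_{v_j}^{-1}(x) ≤ 1}` and `p*_j = m_{v_j}^{-1}(x*)`:
    (xstar : ℝ) (hxstar : xstar = sInf {x : ℝ | ∑ j, minv j x ≤ (1 : ℝ)})
    (pstar : Fin 2 → ℝ) (hpstar : ∀ j, pstar j = minv j xstar) :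
    ((k : ℝ) ≤ 1 / v 1 + 1 → pstar 0 = 1 ∧ pstar 1 = 0) ∧
    (1 / v 1 + 1 < (k : ℝ) → 0 < pstar 1) := by
  have hk2 : 2 ≤ k := by omega
  have hinv0 := hminv_inv 0
  have hlo0 := hminv_lo 0
  rw [hv0] at hinv0 hlo0
  simp only [Fin.sum_univ_two] at hxstar
  refine ⟨fun hcase => ?_, fun hcase => ?_⟩
  · have hw : ((k : ℝ) - 1) * v 1 ≤ 1 := (le_div_iff₀ hv1).1 (by linarith)
    rw [hpstar, hpstar, hxstar,
      sInf_budget_eq_of_mul_le_one hk2 hinv0 hlo0 (hminv_inv 1) (hminv_lo 1) hw]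
    refine ⟨eq_one_of_le_of_leftInvOn_mMarg hk2 hinv0 hlo0 (by gcongr), ?_⟩
    simpa [mMarg_zero] using hminv_inv 1 0 (left_mem_Icc.2 zero_le_one)
  · have hw : 1 < ((k : ℝ) - 1) * v 1 := (div_lt_iff₀ hv1).1 (by linarith)
    rw [hpstar]
    refine pos_of_lt_of_leftInvOn_mMarg hk2 (hminv_inv 1) (hminv_lo 1) ?_
    rw [hxstar]
    exact sInf_budget_lt_of_one_lt_mul hk hinv0 hlo0 (hminv_inv 1) (hminv_lo 1) hv1 hv1' hw

theorem stmt18 (k : ℕ) (hk : 3 ≤ k)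
    -- two battlefields, `v 0 = 1` and `0 < v 1 < 1`, common budget `B = 1`:
    (v : Fin 2 → ℝ) (hv0 : v 0 = 1) (hv1 : 0 < v 1) (hv1' : v 1 < 1)
    -- `minv j` is the extended inverse `m_{v_j}^{-1} : ℝ → [0,1]`:
    (minv : Fin 2 → ℝ → ℝ)
    (hminv_inv : ∀ j, ∀ p ∈ Set.Icc (0 : ℝ) 1, minv j (mMarg k (v j) p) = p)
    (hminv_lo : ∀ j, ∀ x : ℝ, x < v j / k → minv j x = 1)
    (hminv_hi : ∀ j, ∀ x : ℝ, ((k : ℝ) - 1) * v j / k < x → minv j x = 0)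
    -- `x* = inf {x : Σ_j m_{v_j}^{-1}(x) ≤ 1}` and `p*_j = m_{v_j}^{-1}(x*)`:
    (xstar : ℝ) (hxstar : xstar = sInf {x : ℝ | ∑ j, minv j x ≤ (1 : ℝ)})
    (pstar : Fin 2 → ℝ) (hpstar : ∀ j, pstar j = minv j xstar) :
    ((k : ℝ) ≤ 1 / v 1 + 1 → pstar 0 = 1 ∧ pstar 1 = 0) ∧
    (1 / v 1 + 1 < (k : ℝ) → 0 < pstar 1) :=
  stmt18_general k hk v hv0 hv1 hv1' minv hminv_inv hminv_lo xstar hxstar pstar hpstar
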